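/- Let M be a d-dimensional subspace of the space of m×n real matrices and let X₁*,…,X_d* ∈ M be produced by the greedy algorithm. Then {X₁*,…,X_d*} is a basis of M that minimizes rank(X₁) + ⋯ + rank(X_d) over all bases {X₁,…,X_d} of M. -/

import Mathlib

/-- `Xs : Fin d → ℝ^{m×n}` is produced by the greedy algorithm for the subspace `M`:
each `Xs ℓ` lies in `M`, the first `ℓ+1` matrices are linearly independent, and `Xs ℓ`
has minimal rank among all `X ∈ M` keeping the first `ℓ` matrices together with `X`
linearly independent. -/
def GreedyProduced {m n d : ℕ} (M : Submodule ℝ (Matrix (Fin m) (Fin n) ℝ))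
    (Xs : Fin d → Matrix (Fin m) (Fin n) ℝ) : Prop :=
  (∀ i, Xs i ∈ M) ∧
  ∀ ℓ : Fin d,
    LinearIndependent ℝ (fun i : Fin (ℓ.1 + 1) => Xs (Fin.castLE ℓ.isLt i)) ∧
    ∀ X ∈ M,
      LinearIndependent ℝ
        (Fin.snoc (fun i : Fin ℓ.1 => Xs (Fin.castLE ℓ.isLt.le i)) X) →
      (Xs ℓ).rank ≤ X.rank

/-!
The greedy algorithm is optimal on the linear matroid of `M`, for any weight. Sort a competing
independent family `y` by weight. At step `ℓ`, the `ℓ + 1` independent vectors `y₀, …, y_ℓ`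
cannot all lie in the span of the `ℓ` earlier greedy choices, so some `y_j` with `j ≤ ℓ` was a
candidate, whence `w x_ℓ ≤ w y_j ≤ w y_ℓ`; summing over `ℓ` compares the total weights.
That the greedy family spans `M` is a dimension count.
-/

open Submodule Set

section Greedy

variable {K V : Type*} [DivisionRing K] [AddCommGroup V] [Module K V]

theorem exists_notMem_span_range_of_linearIndependent {k : ℕ} (v : Fin k → V)
    {g : Fin (k + 1) → V} (hg : LinearIndependent K g) : ∃ j, g j ∉ span K (range v) := by
  by_contra! hgv
  have := Module.Finite.span_of_finite K (finite_range v)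
  have hle : span K (range g) ≤ span K (range v) := span_le.2 <| range_subset_iff.2 hgv
  have := (finrank_span_eq_card hg).symm.le.trans <|
    (Submodule.finrank_mono hle).trans (finrank_range_le_card (R := K) v)
  simp at this

variable {α : Type*} {d : ℕ} {M : Submodule K V} {w : V → α} {x y : Fin d → V}

theorem weight_greedy_le_of_monotone [Preorder α] (hx : LinearIndependent K x)
    (hgreedy : ∀ ℓ : Fin d, ∀ z ∈ M,
      LinearIndependent K (Fin.snoc (Fin.take ℓ ℓ.isLt.le x) z) → w (x ℓ) ≤ w z)
    (hyM : ∀ i, y i ∈ M) (hy : LinearIndependent K y) (hmono : Monotone (w ∘ y)) (ℓ : Fin d) :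
    w (x ℓ) ≤ w (y ℓ) := by
  obtain ⟨j, hj⟩ := exists_notMem_span_range_of_linearIndependent (Fin.take ℓ ℓ.isLt.le x)
    (hy.comp _ (Fin.castLE_injective ℓ.isLt))
  have hsnoc := linearIndependent_finSnoc.2 ⟨hx.comp _ (Fin.castLE_injective _), hj⟩
  refine (hgreedy ℓ _ (hyM _) hsnoc).trans (hmono ?_)
  exact Fin.le_def.2 (Nat.lt_succ_iff.1 j.isLt)

theorem sum_weight_greedy_le [AddCommMonoid α] [LinearOrder α] [IsOrderedAddMonoid α]
    (hx : LinearIndependent K x)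
    (hgreedy : ∀ ℓ : Fin d, ∀ z ∈ M,
      LinearIndependent K (Fin.snoc (Fin.take ℓ ℓ.isLt.le x) z) → w (x ℓ) ≤ w z)
    (hyM : ∀ i, y i ∈ M) (hy : LinearIndependent K y) :
    ∑ i, w (x i) ≤ ∑ i, w (y i) := by
  set σ := Tuple.sort (w ∘ y)
  calc ∑ i, w (x i) ≤ ∑ i, w (y (σ i)) :=
        Finset.sum_le_sum fun ℓ _ => weight_greedy_le_of_monotone hx hgreedy (fun _ => hyM _)
          (hy.comp σ σ.injective) (Tuple.monotone_sort (w ∘ y)) ℓ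
    _ = ∑ i, w (y i) := Equiv.sum_comp σ (w ∘ y)

end Greedy

namespace GreedyProduced

variable {m n d : ℕ} {M : Submodule ℝ (Matrix (Fin m) (Fin n) ℝ)}
  {Xs : Fin d → Matrix (Fin m) (Fin n) ℝ}

theorem linearIndependent (h : GreedyProduced M Xs) : LinearIndependent ℝ Xs := by
  cases d with
  | zero => exact linearIndependent_empty_type
  | succ k => exact (h.2 (Fin.last k)).1

theorem span_eq (h : GreedyProduced M Xs) (hM : Module.finrank ℝ M = d) :
    span ℝ (range Xs) = M := by
  refine eq_of_le_of_finrank_le (span_le.2 <| range_subset_iff.2 h.1) ?_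
  rw [hM, finrank_span_eq_card h.linearIndependent, Fintype.card_fin]

theorem sum_rank_le (h : GreedyProduced M Xs) {Y : Fin d → Matrix (Fin m) (Fin n) ℝ}
    (hYM : ∀ i, Y i ∈ M) (hY : LinearIndependent ℝ Y) :
    ∑ i, (Xs i).rank ≤ ∑ i, (Y i).rank :=
  sum_weight_greedy_le h.linearIndependent (fun ℓ => (h.2 ℓ).2) hYM hY

end GreedyProduced

/-- Corollary: the output of the greedy algorithm is a basis of `M` minimizing the
sum of the ranks over all bases of `M`. -/
theorem greedy_solves_lowRankBasisProblem {m n d : ℕ}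
    (M : Submodule ℝ (Matrix (Fin m) (Fin n) ℝ))
    (hM : Module.finrank ℝ M = d)
    (Xstar : Fin d → Matrix (Fin m) (Fin n) ℝ)
    (hgreedy : GreedyProduced M Xstar) :
    LinearIndependent ℝ Xstar ∧
    Submodule.span ℝ (Set.range Xstar) = M ∧
    ∀ Y : Fin d → Matrix (Fin m) (Fin n) ℝ,
      (∀ i, Y i ∈ M) → LinearIndependent ℝ Y →
      Submodule.span ℝ (Set.range Y) = M →
      ∑ i, (Xstar i).rank ≤ ∑ i, (Y i).rank :=
  ⟨hgreedy.linearIndependent, hgreedy.span_eq hM,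
    fun _ hYM hY _ => hgreedy.sum_rank_le hYM hY⟩
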